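/- Small inductive dimension is subadditive over products of separable metric spaces: for nonempty separable metric spaces X and Y, ind(X × Y) ≤ ind(X) + ind(Y). -/
import Mathlib

universe u v

open Topology Set Metric TopologicalSpace

/-- `IndLe n X` means the small inductive dimension of `X` is at most `n - 1`:
`IndLe 0 X` iff `X` is empty, and `IndLe (n+1) X` iff every point of `X` has
arbitrarily small open neighborhoods whose frontiers have dimension at most `n - 1`. -/
def IndLe : ℕ → (X : Type u) → [inst : TopologicalSpace X] → Prop
  | 0, X, _ => IsEmpty X
  | n + 1, X, _i => by
    exact ∀ (x : X) (U : Set X), IsOpen U → x ∈ U →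
      ∃ V : Set X, IsOpen V ∧ x ∈ V ∧ V ⊆ U ∧ IndLe n ↥(frontier V)

theorem indLe_zero_iff (X : Type u) [TopologicalSpace X] : IndLe 0 X ↔ IsEmpty X := Iff.rfl

theorem indLe_succ_iff (n : ℕ) (X : Type u) [TopologicalSpace X] :
    IndLe (n + 1) X ↔ ∀ (x : X) (U : Set X), IsOpen U → x ∈ U →
      ∃ V : Set X, IsOpen V ∧ x ∈ V ∧ V ⊆ U ∧ IndLe n ↥(frontier V) := Iff.rfl

theorem indLe_of_isEmpty {X : Type u} [TopologicalSpace X] (h : IsEmpty X) (n : ℕ) :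
    IndLe n X := by
  cases n with
  | zero => exact h
  | succ n => exact fun x => h.elim x

theorem indLe_of_embedding : ∀ (n : ℕ) {X : Type u} {Y : Type v} [TopologicalSpace X]
    [TopologicalSpace Y] (f : X → Y), Topology.IsEmbedding f → IndLe n Y → IndLe n X := by
  intro n
  induction n with
  | zero =>
    intro X Y _ _ f hf h
    exact ⟨fun x => h.elim (f x)⟩
  | succ n ih =>
    intro X Y _ _ f hf h
    intro x U hU hx
    obtain ⟨U', hU', hU'eq⟩ : ∃ t, IsOpen t ∧ f ⁻¹' t = U := by
      rw [hf.isInducing.eq_induced] at hU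
      exact isOpen_induced_iff.mp hU
    obtain ⟨V', hV'o, hfxV', hV'U', hfr⟩ := h (f x) U' hU' (by rw [← hU'eq] at hx; exact hx)
    refine ⟨f ⁻¹' V', hV'o.preimage hf.continuous, hfxV', by rw [← hU'eq]; exact fun a ha => hV'U' ha, ?_⟩
    have hsub : frontier (f ⁻¹' V') ⊆ f ⁻¹' (frontier V') := by
      intro a ha
      have h1 : a ∈ closure (f ⁻¹' V') := ha.1
      have h2 : a ∉ f ⁻¹' V' := fun hmem =>
        ha.2 (by rwa [(hV'o.preimage hf.continuous).interior_eq])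
      have : f a ∈ closure V' := hf.continuous.closure_preimage_subset V' h1
      constructor
      · exact this
      · rw [hV'o.interior_eq]; exact h2
    set g : ↥(frontier (f ⁻¹' V')) → ↥(frontier V') := fun p => ⟨f p.1, hsub p.2⟩ with hg
    have hgc : Continuous g := by
      apply Continuous.subtype_mk
      exact hf.continuous.comp continuous_subtype_val
    have hge : Topology.IsEmbedding g := by
      apply Topology.IsEmbedding.of_comp hgc continuous_subtype_val
      have : (Subtype.val ∘ g) = f ∘ Subtype.val := rfl
      rw [this]
      exact hf.comp Topology.IsEmbedding.subtypeVal
    exact ih g hge hfr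

theorem indLe_subtype_val {X : Type u} [TopologicalSpace X] (S : Set X) (n : ℕ)
    (h : IndLe n X) : IndLe n ↥S :=
  indLe_of_embedding n Subtype.val Topology.IsEmbedding.subtypeVal h

/-- Util2': from `IndLe n ↥B`, get `IndLe n` for `val ⁻¹' B'` inside subtype `A`,
provided `A ∩ B' ⊆ B`. -/
theorem indLe_preimage_val {X : Type u} [TopologicalSpace X] {A B' B : Set X}
    (hsub : A ∩ B' ⊆ B) (n : ℕ) (h : IndLe n ↥B) :
    IndLe n ↥(Subtype.val ⁻¹' B' : Set ↥A) := by
  set f : ↥(Subtype.val ⁻¹' B' : Set ↥A) → ↥B := fun p => ⟨p.1.1, hsub ⟨p.1.2, p.2⟩⟩ with hf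
  have hfc : Continuous f :=
    Continuous.subtype_mk (continuous_subtype_val.comp continuous_subtype_val) _
  have hfe : Topology.IsEmbedding f := by
    apply Topology.IsEmbedding.of_comp hfc continuous_subtype_val
    have : (Subtype.val ∘ f) = (Subtype.val : ↥A → X) ∘
        (Subtype.val : ↥(Subtype.val ⁻¹' B' : Set ↥A) → ↥A) := rfl
    rw [this]
    exact Topology.IsEmbedding.subtypeVal.comp Topology.IsEmbedding.subtypeVal
  exact indLe_of_embedding n f hfe h

theorem indLe_mono_subset {X : Type u} [TopologicalSpace X] {S T : Set X} (hST : S ⊆ T)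
    (n : ℕ) (h : IndLe n ↥T) : IndLe n ↥S :=
  indLe_of_embedding n (Set.inclusion hST) (Topology.IsEmbedding.inclusion hST) h

theorem indLe_image_val {X : Type u} [TopologicalSpace X] {C : Set X} {t : Set ↥C} (n : ℕ)
    (h : IndLe n ↥t) : IndLe n ↥(Subtype.val '' t) := by
  have hmem : ∀ p : ↥(Subtype.val '' t), ∃ hc : p.1 ∈ C, (⟨p.1, hc⟩ : ↥C) ∈ t := by
    rintro ⟨p, a, hat, rfl⟩
    exact ⟨a.2, hat⟩
  set f : ↥(Subtype.val '' t) → ↥t := fun p => ⟨⟨p.1, (hmem p).choose⟩, (hmem p).choose_spec⟩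
  have hfc : Continuous f := by
    apply Continuous.subtype_mk
    apply Continuous.subtype_mk
    exact continuous_subtype_val
  have hfe : Topology.IsEmbedding f := by
    apply Topology.IsEmbedding.of_comp hfc (continuous_subtype_val.comp continuous_subtype_val)
    have : ((Subtype.val ∘ (Subtype.val : ↥t → ↥C)) ∘ f) = Subtype.val := rfl
    rw [this]
    exact Topology.IsEmbedding.subtypeVal
  exact indLe_of_embedding n f hfe h


section Crit
variable {X : Type u} [TopologicalSpace X]

/-- zero-dimensionality criterion via relative clopen neighborhoods -/
theorem indLe_one_crit (S : Set X)
    (h : ∀ z ∈ S, ∀ G : Set X, IsOpen G → z ∈ G →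
      ∃ O : Set X, IsOpen O ∧ z ∈ O ∧ S ∩ O ⊆ G ∧ closure (S ∩ O) ∩ S ⊆ O) :
    IndLe 1 ↥S := by
  rw [indLe_succ_iff]
  intro p U hU hp
  obtain ⟨G, hG, hGeq⟩ := isOpen_induced_iff.mp hU
  obtain ⟨O, hO, hzO, hOG, hclO⟩ := h p.1 p.2 G hG (by rw [← hGeq] at hp; exact hp)
  refine ⟨Subtype.val ⁻¹' O, hO.preimage continuous_subtype_val, hzO, ?_, ?_⟩
  · intro q hq
    rw [← hGeq]
    exact hOG ⟨q.2, hq⟩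
  · rw [indLe_zero_iff, Set.isEmpty_coe_sort]
    have hVo : IsOpen (Subtype.val ⁻¹' O : Set ↥S) := hO.preimage continuous_subtype_val
    rw [hVo.frontier_eq, Set.diff_eq_empty]
    intro q hq
    rw [closure_subtype] at hq
    rw [Subtype.image_preimage_coe] at hq
    exact hclO ⟨hq, q.2⟩
end Crit

section MetricPart
variable {X : Type u} [MetricSpace X]


/-- extension of relative clopen neighborhoods in 0-dim subsets: key metric lemma -/
theorem zeroDimExtend {Z : Set X} (hZ : IndLe 1 ↥Z) {z : X} (hz : z ∈ Z) {G : Set X}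
    (hG : IsOpen G) (hzG : z ∈ G) :
    ∃ V : Set X, IsOpen V ∧ z ∈ V ∧ closure V ⊆ G ∧ frontier V ∩ Z = ∅ := by
  obtain ⟨ε, hε, hball⟩ := Metric.isOpen_iff.mp hG z hzG
  set r := ε/2 with hr
  have hrpos : 0 < r := by positivity
  have hrε : r < ε := by simp [hr]; linarith
  have hclball : closure (Metric.ball z r) ⊆ G :=
    fun y hy => hball (Metric.closedBall_subset_ball hrε (closure_ball_subset_closedBall hy))
  -- apply 0-dimensionality of Z at z inside ball z r
  rw [indLe_succ_iff] at hZ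
  obtain ⟨V', hV'o, hzV', hV'sub, hV'fr⟩ := hZ ⟨z, hz⟩ (Subtype.val ⁻¹' Metric.ball z r)
    (Metric.isOpen_ball.preimage continuous_subtype_val) (Metric.mem_ball_self hrpos)
  rw [indLe_zero_iff, Set.isEmpty_coe_sort] at hV'fr
  have hV'c : IsClosed V' := by
    have h1 : closure V' \ V' = ∅ := by rw [← hV'o.frontier_eq]; exact hV'fr
    exact isClosed_of_closure_subset (Set.diff_eq_empty.mp h1)
  obtain ⟨O, hOo, hOeq⟩ := isOpen_induced_iff.mp hV'o
  obtain ⟨C, hCc, hCeq⟩ := isClosed_induced_iff.mp hV'c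
  have himO : Z ∩ O = Subtype.val '' V' := by rw [← hOeq, Subtype.image_preimage_coe]
  have himC : Z ∩ C = Subtype.val '' V' := by rw [← hCeq, Subtype.image_preimage_coe]
  set W := Z ∩ O with hW
  have hWC : W = Z ∩ C := himO.trans himC.symm
  have hzW : z ∈ W := ⟨hz, by rw [← hOeq] at hzV'; exact hzV'⟩
  have hWball : W ⊆ Metric.ball z r := by
    intro w hw
    have : (⟨w, hw.1⟩ : ↥Z) ∈ V' := by rw [← hOeq]; exact hw.2
    simpa using hV'sub this
  by_cases hcase : Z \ O = ∅
  · -- Z ⊆ O, so Z = W ⊆ ball; take the ball itself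
    refine ⟨Metric.ball z r, Metric.isOpen_ball, Metric.mem_ball_self hrpos, hclball, ?_⟩
    apply Set.eq_empty_of_subset_empty
    rintro y ⟨hyfr, hyZ⟩
    have hyO : y ∈ O := by
      by_contra hyO
      exact absurd (Set.mem_diff y |>.mpr ⟨hyZ, hyO⟩) (by rw [hcase]; exact Set.notMem_empty y)
    have hmem : y ∈ Metric.ball z r := hWball ⟨hyZ, hyO⟩
    exact hyfr.2 (by rwa [Metric.isOpen_ball.interior_eq])
  · obtain ⟨z₀, hz₀⟩ := Set.nonempty_iff_ne_empty.mpr hcase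
    set V := {y ∈ Metric.ball z r | infDist y W < infDist y (Z \ O)} with hV
    have hVo : IsOpen V := by
      apply Metric.isOpen_ball.inter
      exact isOpen_lt (Metric.continuous_infDist_pt W) (Metric.continuous_infDist_pt (Z \ O))
    have hWne : W.Nonempty := ⟨z, hzW⟩
    have hZOne : (Z \ O).Nonempty := ⟨z₀, hz₀⟩
    have hdistpos : ∀ y ∈ O, 0 < infDist y (Z \ O) := by
      intro y hy
      rw [← Metric.infDist_closure]
      apply (isClosed_closure.notMem_iff_infDist_pos hZOne.closure).mp
      intro hmem
      have : closure (Z \ O) ⊆ Oᶜ := closure_minimal (fun a ha => ha.2) (isClosed_compl_iff.mpr hOo)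
      exact this hmem hy
    have hzV : z ∈ V := by
      refine ⟨Metric.mem_ball_self hrpos, ?_⟩
      rw [Metric.infDist_zero_of_mem hzW]
      exact hdistpos z hzW.2
    refine ⟨V, hVo, hzV, fun y hy => hclball (closure_mono (Set.sep_subset _ _) hy), ?_⟩
    apply Set.eq_empty_of_subset_empty
    rintro y ⟨hyfr, hyZ⟩
    have hynV : y ∉ V := fun hmem => hyfr.2 (by rwa [hVo.interior_eq])
    have hycl : y ∈ closure V := hyfr.1
    have hyle : infDist y W ≤ infDist y (Z \ O) := by
      have : closure V ⊆ {y | infDist y W ≤ infDist y (Z \ O)} := by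
        apply closure_minimal
        · exact fun a ha => le_of_lt ha.2
        · exact isClosed_le (Metric.continuous_infDist_pt W) (Metric.continuous_infDist_pt (Z \ O))
      exact this hycl
    by_cases hyO : y ∈ O
    · -- then y ∈ W, so y ∈ V: contradiction
      have hyW : y ∈ W := ⟨hyZ, hyO⟩
      apply hynV
      refine ⟨hWball hyW, ?_⟩
      rw [Metric.infDist_zero_of_mem hyW]
      exact hdistpos y hyO
    · have h0 : infDist y (Z \ O) = 0 := Metric.infDist_zero_of_mem ⟨hyZ, hyO⟩
      have : infDist y W = 0 := le_antisymm (h0 ▸ hyle) Metric.infDist_nonneg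
      have hyclW : y ∈ closure W := (Metric.mem_closure_iff_infDist_zero hWne).mpr this
      have : y ∈ C := by
        have : closure W ⊆ C := by rw [hWC]; exact closure_minimal (fun a ha => ha.2) hCc
        exact this hyclW
      have hyW : y ∈ W := by rw [hWC]; exact ⟨hyZ, this⟩
      exact hyO hyW.2
end MetricPart

section SepPart
variable {X : Type u} [MetricSpace X] [SecondCountableTopology X]

/-- Separation theorem: a partition between disjoint closed sets avoiding a
zero-dimensional subset. -/
theorem sep2 {Z A B : Set X} (hZ : IndLe 1 ↥Z) (hA : IsClosed A) (hB : IsClosed B)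
    (hAB : A ∩ B = ∅) :
    ∃ V : Set X, IsOpen V ∧ A ⊆ V ∧ closure V ∩ B = ∅ ∧ frontier V ∩ Z = ∅ := by
  classical
  -- two open sets with disjoint closures
  obtain ⟨W₁, hW₁o, hAW₁, hclW₁⟩ := normal_exists_closure_subset hA hB.isOpen_compl
    (fun x hx hxB => (Set.eq_empty_iff_forall_notMem.mp hAB x) ⟨hx, hxB⟩)
  obtain ⟨W₂, hW₂o, hBW₂, hclW₂⟩ := normal_exists_closure_subset hB
    isClosed_closure.isOpen_compl
    (fun x hx hxcl => (Set.eq_empty_iff_forall_notMem.mp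
      (Set.eq_empty_iff_forall_notMem.mpr (fun y hy => hclW₁ hy.1 hy.2) : closure W₁ ∩ B = ∅) x)
      ⟨hxcl, hx⟩)
  have hW12 : closure W₁ ∩ closure W₂ = ∅ :=
    Set.eq_empty_iff_forall_notMem.mpr (fun x hx => hclW₂ hx.2 hx.1)
  by_cases hZe : Z = ∅
  · refine ⟨W₁, hW₁o, hAW₁, ?_, by rw [hZe]; exact Set.inter_empty _⟩
    exact Set.eq_empty_iff_forall_notMem.mpr (fun x hx => hclW₁ hx.1 hx.2)
  -- choose clopen-extension neighborhoods for points of Z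
  have hex : ∀ z : ↥Z, ∃ V : Set X, IsOpen V ∧ z.1 ∈ V ∧
      closure V ⊆ (if z.1 ∈ closure W₁ then (closure W₂)ᶜ else (closure W₁)ᶜ) ∧
      frontier V ∩ Z = ∅ := by
    intro z
    apply zeroDimExtend hZ z.2
    · split_ifs <;> exact isClosed_closure.isOpen_compl
    · split_ifs with h
      · exact fun hmem => (Set.eq_empty_iff_forall_notMem.mp hW12 z.1) ⟨h, hmem⟩
      · exact h
  choose Vf hVo hVmem hVcl hVfr using hex
  obtain ⟨T, hTc, hTeq⟩ := isOpen_iUnion_countable Vf hVo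
  have hTcov : Z ⊆ ⋃ z ∈ T, Vf z := by
    intro x hx
    rw [hTeq]
    exact Set.mem_iUnion.mpr ⟨⟨x, hx⟩, hVmem ⟨x, hx⟩⟩
  have hTne : T.Nonempty := by
    obtain ⟨z₀, hz₀⟩ := Set.nonempty_iff_ne_empty.mpr hZe
    obtain ⟨z, hzT, -⟩ := Set.mem_iUnion₂.mp (hTcov hz₀)
    exact ⟨z, hzT⟩
  obtain ⟨e, he⟩ := hTc.exists_eq_range hTne
  set Vn : ℕ → Set X := fun k => Vf (e k) with hVn
  have hcov : Z ⊆ ⋃ k, Vn k := by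
    intro x hx
    obtain ⟨z, hzT, hzV⟩ := Set.mem_iUnion₂.mp (hTcov hx)
    obtain ⟨k, hk⟩ := by rw [he] at hzT; exact hzT
    exact Set.mem_iUnion.mpr ⟨k, by rw [hVn]; rw [← hk] at hzV; exact hzV⟩
  set Aside : ℕ → Prop := fun k => (e k).1 ∈ closure W₁ with hAside
  have hsideA : ∀ k, Aside k → closure (Vn k) ∩ closure W₂ = ∅ := by
    intro k hk
    apply Set.eq_empty_iff_forall_notMem.mpr
    intro x hx
    have := hVcl (e k)
    rw [if_pos hk] at this
    exact this hx.1 hx.2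
  have hsideB : ∀ k, ¬Aside k → closure (Vn k) ∩ closure W₁ = ∅ := by
    intro k hk
    apply Set.eq_empty_iff_forall_notMem.mpr
    intro x hx
    have := hVcl (e k)
    rw [if_neg hk] at this
    exact this hx.1 hx.2
  set SubA : ℕ → Set X := fun k => ⋃ j ∈ {j | j < k ∧ ¬ Aside j}, closure (Vn j) with hSubA
  set SubB : ℕ → Set X := fun k => ⋃ j ∈ {j | j < k ∧ Aside j}, closure (Vn j) with hSubB
  have hSubAc : ∀ k, IsClosed (SubA k) :=
    fun k => Set.Finite.isClosed_biUnion ((Set.finite_Iio k).subset (fun j hj => hj.1))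
      (fun j _ => isClosed_closure)
  have hSubBc : ∀ k, IsClosed (SubB k) :=
    fun k => Set.Finite.isClosed_biUnion ((Set.finite_Iio k).subset (fun j hj => hj.1))
      (fun j _ => isClosed_closure)
  set VA : Set X := W₁ ∪ ⋃ k ∈ {k | Aside k}, (Vn k \ SubA k) with hVA
  set VB : Set X := W₂ ∪ ⋃ k ∈ {k | ¬ Aside k}, ((Vn k \ closure W₁) \ SubB k) with hVB
  have hVAo : IsOpen VA :=
    hW₁o.union (isOpen_biUnion (fun k _ => (hVo (e k)).sdiff (hSubAc k)))
  have hVBo : IsOpen VB :=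
    hW₂o.union (isOpen_biUnion (fun k _ =>
      (((hVo (e k)).sdiff isClosed_closure).sdiff (hSubBc k))))
  -- disjointness
  have hdisj : VA ∩ VB = ∅ := by
    apply Set.eq_empty_iff_forall_notMem.mpr
    rintro x ⟨hxA, hxB⟩
    rcases hxA with hxA | hxA
    · rcases hxB with hxB | hxB
      · exact (Set.eq_empty_iff_forall_notMem.mp hW12 x)
          ⟨subset_closure hxA, subset_closure hxB⟩
      · obtain ⟨j, hj, hxj⟩ := Set.mem_iUnion₂.mp hxB
        exact hxj.1.2 (subset_closure hxA)
    · obtain ⟨k, hk, hxk⟩ := Set.mem_iUnion₂.mp hxA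
      rcases hxB with hxB | hxB
      · exact (Set.eq_empty_iff_forall_notMem.mp (hsideA k hk) x)
          ⟨subset_closure hxk.1, subset_closure hxB⟩
      · obtain ⟨j, hj, hxj⟩ := Set.mem_iUnion₂.mp hxB
        rcases lt_trichotomy j k with hjk | hjk | hjk
        · exact hxk.2 (Set.mem_biUnion ⟨hjk, hj⟩ (subset_closure hxj.1.1))
        · exact hj (hjk ▸ hk)
        · exact hxj.2 (Set.mem_biUnion ⟨hjk, hk⟩ (subset_closure hxk.1))
  -- coverage of Z
  have hcovZ : Z ⊆ VA ∪ VB := by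
    intro x hxZ
    by_cases hx1 : x ∈ W₁
    · exact Or.inl (Or.inl hx1)
    by_cases hx2 : x ∈ W₂
    · exact Or.inr (Or.inl hx2)
    have hk0 : ∃ k, x ∈ closure (Vn k) := by
      obtain ⟨k, hk⟩ := Set.mem_iUnion.mp (hcov hxZ)
      exact ⟨k, subset_closure hk⟩
    set k := Nat.find hk0 with hkdef
    have hk : x ∈ closure (Vn k) := Nat.find_spec hk0
    have hmin : ∀ j, j < k → x ∉ closure (Vn j) := fun j hj => Nat.find_min hk0 hj
    have hxV : x ∈ Vn k := by
      by_contra hxV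
      have hfr : x ∈ frontier (Vn k) := by
        rw [(hVo (e k)).frontier_eq]
        exact ⟨hk, hxV⟩
      exact (Set.eq_empty_iff_forall_notMem.mp (hVfr (e k)) x) ⟨hfr, hxZ⟩
    by_cases hAk : Aside k
    · refine Or.inl (Or.inr (Set.mem_biUnion hAk ⟨hxV, ?_⟩))
      intro hmem
      obtain ⟨j, hj, hxj⟩ := Set.mem_iUnion₂.mp hmem
      exact hmin j hj.1 hxj
    · refine Or.inr (Or.inr (Set.mem_biUnion hAk ⟨⟨hxV, ?_⟩, ?_⟩))
      · intro hmem
        exact (Set.eq_empty_iff_forall_notMem.mp (hsideB k hAk) x) ⟨hk, hmem⟩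
      · intro hmem
        obtain ⟨j, hj, hxj⟩ := Set.mem_iUnion₂.mp hmem
        exact hmin j hj.1 hxj
  -- conclude
  have hclVA : closure VA ∩ VB = ∅ := by
    apply Set.eq_empty_iff_forall_notMem.mpr
    rintro x ⟨hx1, hx2⟩
    have : VA ⊆ VBᶜ := fun a ha hab => (Set.eq_empty_iff_forall_notMem.mp hdisj a) ⟨ha, hab⟩
    exact (closure_minimal this hVBo.isClosed_compl) hx1 hx2
  refine ⟨VA, hVAo, fun a ha => Or.inl (hAW₁ ha), ?_, ?_⟩
  · apply Set.eq_empty_iff_forall_notMem.mpr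
    rintro x ⟨hx1, hx2⟩
    exact (Set.eq_empty_iff_forall_notMem.mp hclVA x) ⟨hx1, Or.inl (hBW₂ hx2)⟩
  · apply Set.eq_empty_iff_forall_notMem.mpr
    rintro x ⟨hx1, hx2⟩
    rcases hcovZ hx2 with hx | hx
    · exact hx1.2 (by rwa [hVAo.interior_eq])
    · exact (Set.eq_empty_iff_forall_notMem.mp hclVA x) ⟨hx1.1, hx⟩


theorem sep_pt {Z U : Set X} (hZ : IndLe 1 ↥Z) {x : X} (hU : IsOpen U) (hx : x ∈ U) :
    ∃ V : Set X, IsOpen V ∧ x ∈ V ∧ V ⊆ U ∧ frontier V ∩ Z = ∅ := by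
  obtain ⟨V, hVo, hxV, hVcl, hVfr⟩ := sep2 hZ (isClosed_singleton (x := x)) hU.isClosed_compl
    (Set.eq_empty_iff_forall_notMem.mpr (fun y hy => hy.2 (hy.1 ▸ hx)))
  refine ⟨V, hVo, hxV rfl, fun v hv => ?_, hVfr⟩
  by_contra hvU
  exact (Set.eq_empty_iff_forall_notMem.mp hVcl v) ⟨subset_closure hv, hvU⟩

/-- the 0-dimensional countable closed sum theorem -/
theorem sum0_nat (C : ℕ → Set X) (hc : ∀ i, IsClosed (C i)) (hcov : ⋃ i, C i = univ)
    (hd : ∀ i, IndLe 1 ↥(C i)) : IndLe 1 X := by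
  rw [indLe_succ_iff]
  intro x U hU hx
  -- step lemma
  have step : ∀ (G G' : Set X), IsOpen G → IsOpen G' → closure G ∩ closure G' = ∅ → ∀ i : ℕ,
      ∃ p : Set X × Set X, (IsOpen p.1 ∧ IsOpen p.2 ∧ closure p.1 ∩ closure p.2 = ∅) ∧
        G ⊆ p.1 ∧ G' ⊆ p.2 ∧ C i ⊆ p.1 ∪ p.2 := by
    intro G G' hGo hG'o hGG' i
    obtain ⟨V, hVo, hGV, hVcl, hVfr⟩ := sep2 (hd i) isClosed_closure isClosed_closure hGG'
    set F₁ := closure G ∪ (C i ∩ closure V) with hF₁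
    set F₂ := closure G' ∪ (C i \ V) with hF₂
    have hF₁c : IsClosed F₁ := isClosed_closure.union ((hc i).inter isClosed_closure)
    have hF₂c : IsClosed F₂ := isClosed_closure.union ((hc i).sdiff hVo)
    have hF₁₂ : F₁ ∩ F₂ = ∅ := by
      apply Set.eq_empty_iff_forall_notMem.mpr
      rintro y ⟨hy1, hy2⟩
      rcases hy1 with hy1 | hy1 <;> rcases hy2 with hy2 | hy2
      · exact (Set.eq_empty_iff_forall_notMem.mp hGG' y) ⟨hy1, hy2⟩
      · exact hy2.2 (hGV hy1)
      · exact (Set.eq_empty_iff_forall_notMem.mp hVcl y) ⟨hy1.2, hy2⟩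
      · refine (Set.eq_empty_iff_forall_notMem.mp hVfr y) ⟨⟨hy1.2, ?_⟩, hy1.1⟩
        rw [hVo.interior_eq]; exact hy2.2
    obtain ⟨H, hHo, hF₁H, hHcl⟩ := normal_exists_closure_subset hF₁c hF₂c.isOpen_compl
      (fun y hy hy2 => (Set.eq_empty_iff_forall_notMem.mp hF₁₂ y) ⟨hy, hy2⟩)
    obtain ⟨H', hH'o, hF₂H', hH'cl⟩ := normal_exists_closure_subset hF₂c
      isClosed_closure.isOpen_compl (fun y hy hy2 => hHcl hy2 hy)
    refine ⟨(H, H'), ⟨hHo, hH'o, ?_⟩, ?_, ?_, ?_⟩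
    · exact Set.eq_empty_iff_forall_notMem.mpr (fun y hy => hH'cl hy.2 hy.1)
    · exact fun a ha => hF₁H (Or.inl (subset_closure ha))
    · exact fun a ha => hF₂H' (Or.inl (subset_closure ha))
    · intro c hcmem
      by_cases hcV : c ∈ V
      · exact Or.inl (hF₁H (Or.inr ⟨hcmem, subset_closure hcV⟩))
      · exact Or.inr (hF₂H' (Or.inr ⟨hcmem, hcV⟩))
  -- initial pair
  obtain ⟨W₁, hW₁o, hxW₁, hW₁cl⟩ := normal_exists_closure_subset isClosed_singleton hU
    (Set.singleton_subset_iff.mpr hx)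
  obtain ⟨W₂, hW₂o, hW₂sup, hW₂cl⟩ := normal_exists_closure_subset hU.isClosed_compl
    isClosed_closure.isOpen_compl
    (fun y hy hy2 => hy (hW₁cl hy2))
  have hW₁₂ : closure W₁ ∩ closure W₂ = ∅ :=
    Set.eq_empty_iff_forall_notMem.mpr (fun y hy => hW₂cl hy.2 hy.1)
  classical
  -- the recursive sequence of pairs
  set Good : Set X × Set X → Prop :=
    fun p => IsOpen p.1 ∧ IsOpen p.2 ∧ closure p.1 ∩ closure p.2 = ∅ with hGood
  have stepEx : ∀ (p : {q : Set X × Set X // Good q}) (i : ℕ),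
      ∃ p' : Set X × Set X, Good p' ∧ p.1.1 ⊆ p'.1 ∧ p.1.2 ⊆ p'.2 ∧ C i ⊆ p'.1 ∪ p'.2 := by
    rintro ⟨⟨G, G'⟩, hG, hG', hGG'⟩ i
    obtain ⟨p', hp'⟩ := step G G' hG hG' hGG' i
    exact ⟨p', hp'.1, hp'.2.1, hp'.2.2.1, hp'.2.2.2⟩
  set seq : ℕ → {q : Set X × Set X // Good q} :=
    fun n => Nat.rec (⟨(W₁, W₂), hW₁o, hW₂o, hW₁₂⟩ : {q : Set X × Set X // Good q})
      (fun i p => ⟨(stepEx p i).choose, (stepEx p i).choose_spec.1⟩) n with hseq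
  have hseq0 : (seq 0).1 = (W₁, W₂) := rfl
  have hseqS : ∀ i, (seq i).1.1 ⊆ (seq (i+1)).1.1 ∧ (seq i).1.2 ⊆ (seq (i+1)).1.2 ∧
      C i ⊆ (seq (i+1)).1.1 ∪ (seq (i+1)).1.2 := by
    intro i
    have h := (stepEx (seq i) i).choose_spec
    exact ⟨h.2.1, h.2.2.1, h.2.2.2⟩
  have hmono1 : ∀ i j, i ≤ j → (seq i).1.1 ⊆ (seq j).1.1 := by
    intro i j hij
    induction j with
    | zero => rw [Nat.le_zero.mp hij]
    | succ j ih =>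
      rcases Nat.lt_or_ge i (j+1) with h | h
      · exact (ih (Nat.lt_succ_iff.mp h)).trans (hseqS j).1
      · rw [Nat.le_antisymm hij h]
  have hmono2 : ∀ i j, i ≤ j → (seq i).1.2 ⊆ (seq j).1.2 := by
    intro i j hij
    induction j with
    | zero => rw [Nat.le_zero.mp hij]
    | succ j ih =>
      rcases Nat.lt_or_ge i (j+1) with h | h
      · exact (ih (Nat.lt_succ_iff.mp h)).trans (hseqS j).2.1
      · rw [Nat.le_antisymm hij h]
  set V : Set X := ⋃ i, (seq i).1.1 with hV
  set V' : Set X := ⋃ i, (seq i).1.2 with hV'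
  have hVo : IsOpen V := isOpen_iUnion (fun i => (seq i).2.1)
  have hV'o : IsOpen V' := isOpen_iUnion (fun i => (seq i).2.2.1)
  have hdisj : V ∩ V' = ∅ := by
    apply Set.eq_empty_iff_forall_notMem.mpr
    rintro y ⟨hy1, hy2⟩
    obtain ⟨i, hi⟩ := Set.mem_iUnion.mp hy1
    obtain ⟨j, hj⟩ := Set.mem_iUnion.mp hy2
    have h1 : y ∈ (seq (max i j)).1.1 := hmono1 i _ (le_max_left i j) hi
    have h2 : y ∈ (seq (max i j)).1.2 := hmono2 j _ (le_max_right i j) hj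
    exact (Set.eq_empty_iff_forall_notMem.mp (seq (max i j)).2.2.2 y)
      ⟨subset_closure h1, subset_closure h2⟩
  have hcup : V ∪ V' = univ := by
    apply Set.eq_univ_iff_forall.mpr
    intro y
    have : y ∈ ⋃ i, C i := by rw [hcov]; trivial
    obtain ⟨i, hi⟩ := Set.mem_iUnion.mp this
    rcases (hseqS i).2.2 hi with h | h
    · exact Or.inl (Set.mem_iUnion.mpr ⟨i+1, h⟩)
    · exact Or.inr (Set.mem_iUnion.mpr ⟨i+1, h⟩)
  refine ⟨V, hVo, Set.mem_iUnion.mpr ⟨0, by rw [hseq0]; exact hxW₁ rfl⟩, ?_, ?_⟩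
  · intro v hv
    by_contra hvU
    have hvW₂ : v ∈ V' := Set.mem_iUnion.mpr ⟨0, by rw [hseq0]; exact hW₂sup hvU⟩
    exact (Set.eq_empty_iff_forall_notMem.mp hdisj v) ⟨hv, hvW₂⟩
  · rw [indLe_zero_iff, Set.isEmpty_coe_sort]
    have hclV : closure V ⊆ V := by
      intro y hy
      have hynV' : y ∉ V' := by
        intro hyV'
        have : V ⊆ V'ᶜ := fun a ha hab =>
          (Set.eq_empty_iff_forall_notMem.mp hdisj a) ⟨ha, hab⟩
        exact (closure_minimal this hV'o.isClosed_compl) hy hyV'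
      rcases (Set.eq_univ_iff_forall.mp hcup y) with h | h
      · exact h
      · exact absurd h hynV'
    rw [hVo.frontier_eq]
    exact Set.diff_eq_empty.mpr hclV

theorem sum0 {ι : Type v} [Countable ι] (C : ι → Set X) (hc : ∀ i, IsClosed (C i))
    (hcov : ⋃ i, C i = univ) (hd : ∀ i, IndLe 1 ↥(C i)) : IndLe 1 X := by
  cases isEmpty_or_nonempty ι with
  | inl h =>
    have : IsEmpty X := by
      rw [Set.iUnion_of_empty] at hcov
      constructor
      intro y
      have : y ∈ (∅ : Set X) := by rw [hcov]; trivial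
      exact this
    exact indLe_of_isEmpty this 1
  | inr h =>
    obtain ⟨f, hf⟩ := exists_surjective_nat ι
    apply sum0_nat (fun k => C (f k)) (fun k => hc (f k)) ?_ (fun k => hd (f k))
    rw [← hcov]
    apply Set.Subset.antisymm
    · exact Set.iUnion_mono' (fun k => ⟨f k, subset_rfl⟩)
    · intro y hy
      obtain ⟨i, hi⟩ := Set.mem_iUnion.mp hy
      obtain ⟨k, hk⟩ := hf i
      exact Set.mem_iUnion.mpr ⟨k, by rw [hk]; exact hi⟩


end SepPart

section CompPart
variable {X : Type u} [MetricSpace X] [SecondCountableTopology X]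

/-- composition lemma: a space covered by an `n`-dimensional part and a
zero-dimensional part has dimension at most `n+1`. -/
theorem indLe_comp {Y Z : Set X} (hcov : Y ∪ Z = Set.univ) (n : ℕ)
    (hY : IndLe (n+1) ↥Y) (hZ : IndLe 1 ↥Z) : IndLe (n+2) X := by
  rw [indLe_succ_iff]
  intro x U hU hx
  obtain ⟨V, hVo, hxV, hVU, hVfr⟩ := sep_pt hZ hU hx
  refine ⟨V, hVo, hxV, hVU, ?_⟩
  have hsub : frontier V ⊆ Y := by
    intro p hp
    rcases (Set.eq_univ_iff_forall.mp hcov p) with h | h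
    · exact h
    · exact absurd (⟨hp, h⟩ : p ∈ frontier V ∩ Z)
        (fun hmem => (Set.eq_empty_iff_forall_notMem.mp hVfr p) hmem)
  exact indLe_mono_subset hsub (n+1) hY

end CompPart

/-- existence of a countable basis consisting of open sets with small frontiers -/
theorem basis_small_frontier (S : Type u) [MetricSpace S] [SecondCountableTopology S] (n : ℕ)
    (h : IndLe (n+1) S) :
    ∃ V : ℕ × ℕ → Set S, (∀ k, IsOpen (V k)) ∧ (∀ k, IndLe n ↥(frontier (V k))) ∧
      ∀ (x : S) (G : Set S), IsOpen G → x ∈ G → ∃ k, x ∈ V k ∧ V k ⊆ G := by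
  classical
  cases isEmpty_or_nonempty S with
  | inl he =>
    refine ⟨fun _ => ∅, fun _ => isOpen_empty, fun _ => ?_, fun x => (he.elim x)⟩
    exact indLe_of_isEmpty (Set.isEmpty_coe_sort.mpr frontier_empty) n
  | inr hne =>
    obtain ⟨b, hbc, hbne, hbasis⟩ := exists_countable_basis S
    have hbnonempty : b.Nonempty := by
      obtain ⟨x⟩ := hne
      obtain ⟨v, hv, _, _⟩ := hbasis.exists_subset_of_mem_open (Set.mem_univ x) isOpen_univ
      exact ⟨v, hv⟩
    obtain ⟨bs, hbs⟩ := hbc.exists_eq_range hbnonempty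
    set P : ℕ → ℕ → Prop := fun i j => ∃ W : Set S, IsOpen W ∧ bs i ⊆ W ∧ W ⊆ bs j ∧
      IndLe n ↥(frontier W) with hP
    set V : ℕ × ℕ → Set S := fun p => if hp : P p.1 p.2 then hp.choose else ∅ with hV
    have hVspec : ∀ p, IsOpen (V p) ∧ IndLe n ↥(frontier (V p)) := by
      intro p
      by_cases hp : P p.1 p.2
      · have hs := hp.choose_spec
        have hVp : V p = hp.choose := dif_pos hp
        rw [hVp]
        exact ⟨hs.1, hs.2.2.2⟩
      · have hVp : V p = ∅ := dif_neg hp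
        rw [hVp]
        exact ⟨isOpen_empty, indLe_of_isEmpty (Set.isEmpty_coe_sort.mpr frontier_empty) n⟩
    refine ⟨V, fun p => (hVspec p).1, fun p => (hVspec p).2, ?_⟩
    intro x G hGo hxG
    obtain ⟨vj, hvjb, hxvj, hvjG⟩ := hbasis.exists_subset_of_mem_open hxG hGo
    obtain ⟨j, hj⟩ : ∃ j, bs j = vj := by rw [hbs] at hvjb; exact hvjb
    rw [indLe_succ_iff] at h
    obtain ⟨W, hWo, hxW, hWsub, hWfr⟩ := h x (bs j) (by rw [hj]; exact hbasis.isOpen hvjb)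
      (by rw [hj]; exact hxvj)
    obtain ⟨vi, hvib, hxvi, hviW⟩ := hbasis.exists_subset_of_mem_open hxW hWo
    obtain ⟨i, hi⟩ : ∃ i, bs i = vi := by rw [hbs] at hvib; exact hvib
    have hPij : P i j := ⟨W, hWo, by rw [hi]; exact hviW, hWsub, hWfr⟩
    have hspec := hPij.choose_spec
    have hVij : V (i, j) = hPij.choose := dif_pos hPij
    refine ⟨(i, j), ?_, ?_⟩
    · rw [hVij]
      exact hspec.2.1 (by rw [hi]; exact hxvi)
    · rw [hVij]
      intro y hy
      apply hvjG
      rw [← hj]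
      exact hspec.2.2.1 hy

/-- the countable closed sum theorem for all dimensions -/
theorem sumThm : ∀ (n : ℕ) (X : Type u) [MetricSpace X] [SecondCountableTopology X]
    (ι : Type) [Countable ι] (C : ι → Set X), (∀ i, IsClosed (C i)) →
    (⋃ i, C i = Set.univ) → (∀ i, IndLe (n+1) ↥(C i)) → IndLe (n+1) X := by
  intro n
  induction n with
  | zero =>
    intro X _ _ ι _ C hc hcov hd
    exact sum0 C hc hcov hd
  | succ n ih =>
    intro X _ _ ι _ C hc hcov hd
    have hbf := fun i => basis_small_frontier ↥(C i) (n+1) (hd i)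
    choose Vb hVbo hVbfr hVbbasis using hbf
    set Yset : ι × (ℕ × ℕ) → Set X := fun p => Subtype.val '' (frontier (Vb p.1 p.2)) with hYset
    have hYc : ∀ p, IsClosed (Yset p) := fun p =>
      ((hc p.1).isClosedEmbedding_subtypeVal).isClosedMap _ isClosed_frontier
    have hYind : ∀ p, IndLe (n+1) ↥(Yset p) := fun p => indLe_image_val (n+1) (hVbfr p.1 p.2)
    set Y : Set X := ⋃ p, Yset p with hY
    have hYind2 : IndLe (n+1) ↥Y := by
      apply ih ↥Y (ι × (ℕ × ℕ)) (fun p => Subtype.val ⁻¹' (Yset p))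
      · exact fun p => (hYc p).preimage continuous_subtype_val
      · apply Set.eq_univ_iff_forall.mpr
        intro q
        obtain ⟨p, hp⟩ := Set.mem_iUnion.mp q.2
        exact Set.mem_iUnion.mpr ⟨p, hp⟩
      · intro p
        exact indLe_preimage_val Set.inter_subset_right (n+1) (hYind p)
    set Z : Set X := Yᶜ with hZdef
    have hZi : ∀ i, IndLe 1 ↥(C i ∩ Z) := by
      intro i
      apply indLe_one_crit
      intro z hz G hGo hzG
      obtain ⟨k, hk1, hk2⟩ := hVbbasis i ⟨z, hz.1⟩ (Subtype.val ⁻¹' G)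
        (hGo.preimage continuous_subtype_val) hzG
      obtain ⟨O, hOo, hOeq⟩ := isOpen_induced_iff.mp (hVbo i k)
      have himg : C i ∩ O = Subtype.val '' (Vb i k) := by
        rw [← hOeq, Subtype.image_preimage_coe]
      refine ⟨O, hOo, ?_, ?_, ?_⟩
      · have : (⟨z, hz.1⟩ : ↥(C i)) ∈ Subtype.val ⁻¹' O := by rw [hOeq]; exact hk1
        exact this
      · rintro w ⟨⟨hwC, hwZ⟩, hwO⟩
        have : (⟨w, hwC⟩ : ↥(C i)) ∈ Vb i k := by
          rw [← hOeq] at hk1 ⊢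
          exact hwO
        exact hk2 this
      · rintro w ⟨hwcl, hwC, hwZ⟩
        have h1 : w ∈ closure (C i ∩ O) :=
          closure_mono (show (C i ∩ Z) ∩ O ⊆ C i ∩ O from fun a ha => ⟨ha.1.1, ha.2⟩) hwcl
        have h2 : closure (C i ∩ O) ⊆ (C i ∩ O) ∪ Yset (i, k) := by
          rw [himg, ((hc i).isClosedEmbedding_subtypeVal).closure_image_eq]
          intro a ha
          obtain ⟨q, hq, rfl⟩ := ha
          by_cases hqV : q ∈ Vb i k
          · exact Or.inl ⟨q, hqV, rfl⟩
          · refine Or.inr ⟨q, ⟨hq, ?_⟩, rfl⟩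
            rwa [(hVbo i k).interior_eq]
        rcases h2 h1 with h | h
        · exact h.2
        · exact absurd (Set.mem_iUnion.mpr ⟨(i, k), h⟩ : w ∈ Y) hwZ
    have hZ0 : IndLe 1 ↥Z := by
      apply sum0 (fun i : ι => (Subtype.val ⁻¹' (C i) : Set ↥Z))
      · exact fun i => (hc i).preimage continuous_subtype_val
      · apply Set.eq_univ_iff_forall.mpr
        intro q
        have : q.1 ∈ ⋃ i, C i := by rw [hcov]; trivial
        obtain ⟨i, hi⟩ := Set.mem_iUnion.mp this
        exact Set.mem_iUnion.mpr ⟨i, hi⟩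
      · intro i
        exact indLe_preimage_val (B := C i ∩ Z) (fun a ha => ⟨ha.2, ha.1⟩) 1 (hZi i)
    exact indLe_comp (Set.union_compl_self Y) n hYind2 hZ0

/-- the product theorem -/
theorem prodThm : ∀ (k m n : ℕ), m + n = k →
    ∀ (X Y : Type u) [MetricSpace X] [SecondCountableTopology X] [MetricSpace Y]
      [SecondCountableTopology Y], IndLe (m+1) X → IndLe (n+1) Y →
      IndLe (m+n+1) (X × Y) := by
  intro k
  induction k using Nat.strong_induction_on with
  | _ k ih =>
    intro m n hmn X Y _ _ _ _ hX hY
    have hX0 := hX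
    have hY0 := hY
    rw [indLe_succ_iff]
    rintro ⟨a, b⟩ U hU hab
    obtain ⟨u, v, hu, hv, hau, hbv, huv⟩ := isOpen_prod_iff.mp hU a b hab
    rw [indLe_succ_iff] at hX hY
    obtain ⟨V, hVo, haV, hVu, hVfr⟩ := hX a u hu hau
    obtain ⟨W, hWo, hbW, hWv, hWfr⟩ := hY b v hv hbv
    refine ⟨V ×ˢ W, hVo.prod hWo, ⟨haV, hbW⟩, (Set.prod_mono hVu hWv).trans huv, ?_⟩
    have hfrsub : frontier (V ×ˢ W) ⊆
        (closure V ×ˢ frontier W) ∪ (frontier V ×ˢ closure W) := by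
      rw [frontier_prod_eq]
    have hpiece1 : IndLe (m+n) ↥(closure V ×ˢ frontier W : Set (X × Y)) := by
      cases n with
      | zero =>
        have hfrW : frontier W = ∅ := Set.isEmpty_coe_sort.mp hWfr
        apply indLe_of_isEmpty
        rw [Set.isEmpty_coe_sort, hfrW, Set.prod_empty]
      | succ n' =>
        have h1 : IndLe (m+1) ↥(closure V) := indLe_subtype_val _ _ hX0
        have h3 := ih (m + n') (by omega) m n' rfl ↥(closure V) ↥(frontier W) h1 hWfr
        have h4 : IndLe (m + (n'+1)) (↥(closure V) × ↥(frontier W)) := by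
          have he : m + n' + 1 = m + (n'+1) := by omega
          rwa [he] at h3
        exact indLe_of_embedding _ _
          (Homeomorph.Set.prod (closure V) (frontier W)).isEmbedding h4
    have hpiece2 : IndLe (m+n) ↥(frontier V ×ˢ closure W : Set (X × Y)) := by
      cases m with
      | zero =>
        have hfrV : frontier V = ∅ := Set.isEmpty_coe_sort.mp hVfr
        apply indLe_of_isEmpty
        rw [Set.isEmpty_coe_sort, hfrV, Set.empty_prod]
      | succ m' =>
        have h1 : IndLe (n+1) ↥(closure W) := indLe_subtype_val _ _ hY0
        have h3 := ih (m' + n) (by omega) m' n rfl ↥(frontier V) ↥(closure W) hVfr h1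
        have h4 : IndLe (m' + 1 + n) (↥(frontier V) × ↥(closure W)) := by
          have he : m' + n + 1 = m' + 1 + n := by omega
          rwa [he] at h3
        exact indLe_of_embedding _ _
          (Homeomorph.Set.prod (frontier V) (closure W)).isEmbedding h4
    cases hs : m + n with
    | zero =>
      apply indLe_of_isEmpty
      rw [Set.isEmpty_coe_sort]
      rw [hs] at hpiece1 hpiece2
      have he1 : (closure V ×ˢ frontier W : Set (X × Y)) = ∅ :=
        Set.isEmpty_coe_sort.mp hpiece1
      have he2 : (frontier V ×ˢ closure W : Set (X × Y)) = ∅ :=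
        Set.isEmpty_coe_sort.mp hpiece2
      apply Set.eq_empty_of_subset_empty
      intro q hq
      rcases hfrsub hq with h | h
      · rw [he1] at h; exact h
      · rw [he2] at h; exact h
    | succ p =>
      classical
      apply sumThm p ↥(frontier (V ×ˢ W)) Bool
        (fun s => if s then Subtype.val ⁻¹' (closure V ×ˢ frontier W)
          else Subtype.val ⁻¹' (frontier V ×ˢ closure W))
      · intro s
        cases s
        · exact ((isClosed_frontier.prod isClosed_closure).preimage
            continuous_subtype_val)
        · exact ((isClosed_closure.prod isClosed_frontier).preimage
            continuous_subtype_val)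
      · apply Set.eq_univ_iff_forall.mpr
        intro q
        rcases hfrsub q.2 with h | h
        · exact Set.mem_iUnion.mpr ⟨true, by rw [if_pos rfl]; exact h⟩
        · exact Set.mem_iUnion.mpr ⟨false, by rw [if_neg Bool.false_ne_true]; exact h⟩
      · intro s
        cases s
        · rw [if_neg Bool.false_ne_true]
          exact indLe_preimage_val Set.inter_subset_right (p+1) (hs ▸ hpiece2)
        · rw [if_pos rfl]
          exact indLe_preimage_val Set.inter_subset_right (p+1) (hs ▸ hpiece1)

/-- Small inductive dimension is subadditive over products of nonempty separable
metric spaces: ind(X × Y) ≤ ind X + ind Y. -/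
theorem stmt15 {X Y : Type u} [MetricSpace X] [MetricSpace Y]
    [TopologicalSpace.SeparableSpace X] [TopologicalSpace.SeparableSpace Y]
    [Nonempty X] [Nonempty Y] (m n : ℕ)
    (hX : IndLe (m + 1) X) (hY : IndLe (n + 1) Y) :
    IndLe (m + n + 1) (X × Y) := by
  haveI : SecondCountableTopology X := UniformSpace.secondCountable_of_separable X
  haveI : SecondCountableTopology Y := UniformSpace.secondCountable_of_separable Y
  exact prodThm (m+n) m n rfl X Y hX hY
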